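/- arXiv:1712.08906 — 6 statements merged into one kernel-verified Lean document; each statement's English description precedes it below -/
import Mathlib

section
/- In the polynomial ring ℚ[u1,u2,u3,v1,v2,v3], the polynomials x0, x1, ..., x6 defined below satisfy the two identities x1 + x2 + x3 + x4 + x5 + x6 = 0 and x0² = (x1⁴ + x2⁴ + x3⁴ + x4⁴ + x5⁴ + x6⁴) − (1/4)·(x1² + x2² + x3² + x4² + x5² + x6²)². (These identities express that the explicit formulas define a morphism from ℙ²×ℙ² to the Coble fourfold, i.e. the small resolution ρ_{4,2} of Proposition 2.3.) -/
open MvPolynomial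

namespace Stmt0

noncomputable section

/-- The polynomial ring ℚ[u1,u2,u3,v1,v2,v3]. -/
abbrev R : Type := MvPolynomial (Fin 6) ℚ

def u1 : R := X 0
def u2 : R := X 1
def u3 : R := X 2
def v1 : R := X 3
def v2 : R := X 4
def v3 : R := X 5

def x0 : R :=
  -u1*u3*v1*v2 - u1*u2*v2*v3 - u2*u3*v1*v3 + u1*u2*v1*v3 + u2*u3*v1*v2 + u1*u3*v2*v3
def x1 : R := C (1/3 : ℚ) * (u2*v3 - 2*u3*v1 - 2*u1*v2 + u3*v2 + u1*v3 + u2*v1)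
def x2 : R := C (1/3 : ℚ) * (-2*u2*v3 + u3*v1 - 2*u1*v2 + u3*v2 + u1*v3 + u2*v1)
def x3 : R := C (1/3 : ℚ) * (-2*u2*v3 - 2*u3*v1 + u1*v2 + u3*v2 + u1*v3 + u2*v1)
def x4 : R := C (1/3 : ℚ) * (u2*v3 + u3*v1 + u1*v2 + u3*v2 - 2*u1*v3 - 2*u2*v1)
def x5 : R := C (1/3 : ℚ) * (u2*v3 + u3*v1 + u1*v2 - 2*u3*v2 + u1*v3 - 2*u2*v1)
def x6 : R := C (1/3 : ℚ) * (u2*v3 + u3*v1 + u1*v2 - 2*u3*v2 - 2*u1*v3 + u2*v1)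

end

/-- The explicit formulas (2.10) define a morphism from ℙ²×ℙ² to the Coble fourfold:
the polynomials x0, x1, …, x6 satisfy the equation of the ambient hyperplane and the
equation of the Coble fourfold. -/
theorem coble_resolution_formulas :
    x1 + x2 + x3 + x4 + x5 + x6 = 0 ∧
    x0 ^ 2 =
      (x1 ^ 4 + x2 ^ 4 + x3 ^ 4 + x4 ^ 4 + x5 ^ 4 + x6 ^ 4) -
        C (1/4 : ℚ) * (x1 ^ 2 + x2 ^ 2 + x3 ^ 2 + x4 ^ 2 + x5 ^ 2 + x6 ^ 2) ^ 2 := by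
  constructor
  · simp only [x1, x2, x3, x4, x5, x6, u1, u2, u3, v1, v2, v3]
    ring
  · refine mul_left_cancel₀ (show ((324:R)) ≠ 0 by norm_num) ?_
    have h324 : ((324:R)) = C (324:ℚ) := (map_ofNat C 324).symm
    have e1 : ((324:R)) * C (1/3:ℚ)^4 = 4 := by
      rw [h324, ← C_pow, ← C_mul]; norm_num; exact map_ofNat C 4
    have e2 : ((324:R)) * C (1/4:ℚ) * C (1/3:ℚ)^4 = 1 := by
      rw [h324, ← C_mul, ← C_pow, ← C_mul]; norm_num
    simp only [x0, x1, x2, x3, x4, x5, x6, u1, u2, u3, v1, v2, v3]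
    linear_combination (-((X 1*X 5 - 2*X 2*X 3 - 2*X 0*X 4 + X 2*X 4 + X 0*X 5 + X 1*X 3)^4+(-2*X 1*X 5 + X 2*X 3 - 2*X 0*X 4 + X 2*X 4 + X 0*X 5 + X 1*X 3)^4+(-2*X 1*X 5 - 2*X 2*X 3 + X 0*X 4 + X 2*X 4 + X 0*X 5 + X 1*X 3)^4+(X 1*X 5 + X 2*X 3 + X 0*X 4 + X 2*X 4 - 2*X 0*X 5 - 2*X 1*X 3)^4+(X 1*X 5 + X 2*X 3 + X 0*X 4 - 2*X 2*X 4 + X 0*X 5 - 2*X 1*X 3)^4+(X 1*X 5 + X 2*X 3 + X 0*X 4 - 2*X 2*X 4 - 2*X 0*X 5 + X 1*X 3)^4)) * e1 + ((X 1*X 5 - 2*X 2*X 3 - 2*X 0*X 4 + X 2*X 4 + X 0*X 5 + X 1*X 3)^2+(-2*X 1*X 5 + X 2*X 3 - 2*X 0*X 4 + X 2*X 4 + X 0*X 5 + X 1*X 3)^2+(-2*X 1*X 5 - 2*X 2*X 3 + X 0*X 4 + X 2*X 4 + X 0*X 5 + X 1*X 3)^2+(X 1*X 5 + X 2*X 3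 + X 0*X 4 + X 2*X 4 - 2*X 0*X 5 - 2*X 1*X 3)^2+(X 1*X 5 + X 2*X 3 + X 0*X 4 - 2*X 2*X 4 + X 0*X 5 - 2*X 1*X 3)^2+(X 1*X 5 + X 2*X 3 + X 0*X 4 - 2*X 2*X 4 - 2*X 0*X 5 + X 1*X 3)^2)^2 * e2
end Stmt0
end

section
/- Consider the rational function s(τ) = (τ³ − τ)/(5τ² + 3) on ℂ. Then: (i) for every c ∈ ℂ, the set of τ ∈ ℂ with 5τ² + 3 ≠ 0 and s(τ) = c is nonempty and has at most three elements (moreover every complex root of τ³ − τ − c(5τ² + 3) automatically satisfies 5τ² + 3 ≠ 0); (ii) at every τ with 5τ² + 3 ≠ 0, s is complex-differentiable with derivative (5τ² − 1)(τ² + 3)/(5τ² + 3)², so the derivative vanishes if and only if 5τ² = 1 or τ² = −3, i.e. exactly at the four points τ = ±1/√5 and τ = ±√(−3). (Lemma 3.12: the map s is a triple covering ℙ¹ → ℙ¹ with simple ramification at these four points.) -/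
/-!
The fibre of `s = P / Q`, `P = τ³ - τ`, `Q = 5τ² + 3`, over `c` is the root set of the cubic
`P - c Q`. Since `P` and `Q` are coprime (`24 = 25τ P + (8 - 5τ²) Q`), no root of `P - c Q` is a
pole of `s`, so over `ℂ` every fibre is nonempty and has at most `deg P = 3` points. The critical
points are read off the quotient rule.
-/

open Polynomial Complex

namespace Polynomial

variable {K : Type*} [Field K]

def ratioFiber (P Q : K[X]) (c : K) : Set K :=
  {x | Q.eval x ≠ 0 ∧ P.eval x / Q.eval x = c}

lemma eval_ne_zero_of_isRoot_sub_C_mul {P Q : K[X]} (hPQ : IsCoprime P Q) {c x : K}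
    (hx : (P - C c * Q).IsRoot x) : Q.eval x ≠ 0 := by
  intro hQ
  have hP : P.eval x = 0 := by simpa [hQ] using hx
  simpa [hP, hQ] using aeval_ne_zero_of_isCoprime hPQ x

lemma mem_ratioFiber_iff {P Q : K[X]} (hPQ : IsCoprime P Q) {c x : K} :
    x ∈ ratioFiber P Q c ↔ (P - C c * Q).IsRoot x := by
  refine ⟨fun ⟨hQ, hx⟩ => ?_, fun hx => ⟨eval_ne_zero_of_isRoot_sub_C_mul hPQ hx, ?_⟩⟩
  · simp [(div_eq_iff hQ).mp hx]
  · rw [div_eq_iff (eval_ne_zero_of_isRoot_sub_C_mul hPQ hx)]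
    simpa [sub_eq_zero] using hx

lemma natDegree_sub_C_mul_of_natDegree_lt {P Q : K[X]} (hdeg : Q.natDegree < P.natDegree)
    (c : K) : (P - C c * Q).natDegree = P.natDegree :=
  natDegree_sub_eq_left_of_natDegree_lt ((natDegree_C_mul_le c Q).trans_lt hdeg)

lemma ratioFiber_subset_rootSet {P Q : K[X]} (hdeg : Q.natDegree < P.natDegree) (c : K) :
    ratioFiber P Q c ⊆ (P - C c * Q).rootSet K := by
  rintro x ⟨hQ, hx⟩
  refine (mem_rootSet_of_ne fun h => ?_).mpr ?_
  · have := natDegree_sub_C_mul_of_natDegree_lt hdeg c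
    rw [h, natDegree_zero] at this
    omega
  · simp [(div_eq_iff hQ).mp hx]

lemma ratioFiber_ncard_le {P Q : K[X]} (hdeg : Q.natDegree < P.natDegree) (c : K) :
    (ratioFiber P Q c).ncard ≤ P.natDegree :=
  calc (ratioFiber P Q c).ncard
      ≤ ((P - C c * Q).rootSet K).ncard :=
        Set.ncard_le_ncard (ratioFiber_subset_rootSet hdeg c) (rootSet_finite _ K)
    _ ≤ (P - C c * Q).natDegree := ncard_rootSet_le _ K
    _ = P.natDegree := natDegree_sub_C_mul_of_natDegree_lt hdeg c

lemma ratioFiber_nonempty [IsAlgClosed K] {P Q : K[X]} (hPQ : IsCoprime P Q)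
    (hdeg : Q.natDegree < P.natDegree) (c : K) : (ratioFiber P Q c).Nonempty := by
  have hpos : 0 < (P - C c * Q).natDegree := by
    rw [natDegree_sub_C_mul_of_natDegree_lt hdeg c]
    exact (Nat.zero_le _).trans_lt hdeg
  obtain ⟨x, hx⟩ := IsAlgClosed.exists_root _ (natDegree_pos_iff_degree_pos.mp hpos).ne'
  exact ⟨x, (mem_ratioFiber_iff hPQ).mpr hx⟩

end Polynomial

noncomputable def sNum : ℂ[X] := X ^ 3 - X

noncomputable def sDen : ℂ[X] := 5 * X ^ 2 + 3

lemma isCoprime_sNum_sDen : IsCoprime sNum sDen := by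
  have h : C (24⁻¹ : ℂ) * 24 = 1 := by
    rw [← C_ofNat, ← C_mul, inv_mul_cancel₀ (by norm_num), C_1]
  exact ⟨C 24⁻¹ * (25 * X), C 24⁻¹ * (8 - 5 * X ^ 2), by
    unfold sNum sDen
    linear_combination h⟩

lemma natDegree_sNum : sNum.natDegree = 3 := by
  unfold sNum
  compute_degree!

lemma natDegree_sDen_lt_natDegree_sNum : sDen.natDegree < sNum.natDegree := by
  rw [natDegree_sNum]
  unfold sDen
  compute_degree!

lemma ratioFiber_sNum_sDen (c : ℂ) :
    ratioFiber sNum sDen c = {τ : ℂ | 5 * τ ^ 2 + 3 ≠ 0 ∧ (τ ^ 3 - τ) / (5 * τ ^ 2 + 3) = c} := by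
  ext
  simp [ratioFiber, sNum, sDen]

lemma hasDerivAt_cubic_div_quadratic {τ : ℂ} (hτ : 5 * τ ^ 2 + 3 ≠ 0) :
    HasDerivAt (fun x : ℂ => (x ^ 3 - x) / (5 * x ^ 2 + 3))
      ((5 * τ ^ 2 - 1) * (τ ^ 2 + 3) / (5 * τ ^ 2 + 3) ^ 2) τ := by
  refine (((hasDerivAt_pow 3 τ).sub (hasDerivAt_id' τ)).div
    (((hasDerivAt_pow 2 τ).const_mul 5).add_const 3) hτ).congr_deriv ?_
  simp only [Pi.sub_apply]
  push_cast
  ring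

lemma critical_div_eq_zero_iff {τ : ℂ} (hτ : 5 * τ ^ 2 + 3 ≠ 0) :
    (5 * τ ^ 2 - 1) * (τ ^ 2 + 3) / (5 * τ ^ 2 + 3) ^ 2 = 0 ↔ 5 * τ ^ 2 = 1 ∨ τ ^ 2 = -3 := by
  rw [div_eq_zero_iff, mul_eq_zero, sub_eq_zero, add_eq_zero_iff_eq_neg]
  simp [hτ]

lemma five_mul_sq_eq_one_iff (τ : ℂ) :
    5 * τ ^ 2 = 1 ↔ τ = 1 / (Real.sqrt 5 : ℂ) ∨ τ = -(1 / (Real.sqrt 5 : ℂ)) := by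
  rw [← sq_eq_sq_iff_eq_or_eq_neg, div_pow, one_pow, ← ofReal_pow,
    Real.sq_sqrt (by norm_num), eq_div_iff (by norm_num), mul_comm]
  norm_cast

lemma sq_eq_neg_three_iff (τ : ℂ) :
    τ ^ 2 = -3 ↔ τ = I * (Real.sqrt 3 : ℂ) ∨ τ = -(I * (Real.sqrt 3 : ℂ)) := by
  rw [← sq_eq_sq_iff_eq_or_eq_neg, mul_pow, I_sq, ← ofReal_pow, Real.sq_sqrt (by norm_num)]
  norm_num

/-- Lemma 3.12: the map s(τ) = (τ³−τ)/(5τ²+3) is a triple covering of ℙ¹ with simple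
ramification at the four points τ = ±1/√5 and τ = ±√(−3). -/
theorem s_triple_cover_ramification :
    (∀ c : ℂ,
      ({τ : ℂ | 5*τ^2 + 3 ≠ 0 ∧ (τ^3 - τ) / (5*τ^2 + 3) = c}).Nonempty ∧
      ({τ : ℂ | 5*τ^2 + 3 ≠ 0 ∧ (τ^3 - τ) / (5*τ^2 + 3) = c}).ncard ≤ 3 ∧
      (∀ τ : ℂ, τ^3 - τ - c * (5*τ^2 + 3) = 0 → 5*τ^2 + 3 ≠ 0)) ∧
    (∀ τ : ℂ, 5*τ^2 + 3 ≠ 0 →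
      HasDerivAt (fun x : ℂ => (x^3 - x) / (5*x^2 + 3))
        ((5*τ^2 - 1) * (τ^2 + 3) / (5*τ^2 + 3)^2) τ ∧
      ((5*τ^2 - 1) * (τ^2 + 3) / (5*τ^2 + 3)^2 = 0 ↔ 5*τ^2 = 1 ∨ τ^2 = -3) ∧
      (5*τ^2 = 1 ∨ τ^2 = -3 ↔
        τ = 1 / (Real.sqrt 5 : ℂ) ∨ τ = -(1 / (Real.sqrt 5 : ℂ)) ∨
        τ = Complex.I * (Real.sqrt 3 : ℂ) ∨ τ = -(Complex.I * (Real.sqrt 3 : ℂ)))) := by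
  refine ⟨fun c => ⟨?_, ?_, fun τ hτ => ?_⟩, fun τ hτ => ⟨hasDerivAt_cubic_div_quadratic hτ,
    critical_div_eq_zero_iff hτ, ?_⟩⟩
  · rw [← ratioFiber_sNum_sDen]
    exact ratioFiber_nonempty isCoprime_sNum_sDen natDegree_sDen_lt_natDegree_sNum c
  · rw [← ratioFiber_sNum_sDen, ← natDegree_sNum]
    exact ratioFiber_ncard_le natDegree_sDen_lt_natDegree_sNum c
  · have hroot : (sNum - C c * sDen).IsRoot τ := by simpa [sNum, sDen] using hτ
    simpa [sDen] using eval_ne_zero_of_isRoot_sub_C_mul isCoprime_sNum_sDen hroot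
  · rw [five_mul_sq_eq_one_iff, sq_eq_neg_three_iff, or_assoc]
end

section
/- Let ω ∈ ℂ satisfy ω² + ω + 1 = 0. Then for all u1, u2, u3, v1, v2 ∈ ℂ, q0(u)(v1,v2,0) + q∞(u)(v1,v2,0) = (2/3)·(u1v2 + ωu2v1 + ω²u3v1 + ωu3v2)·(u1v2 + ω²u2v1 + ωu3v1 + ω²u3v2), where q0(u)(v) = u3(u2−u1)v1v2 + u2(u1−u3)v1v3 + u1(u3−u2)v2v3 and q∞(u)(v) = (1/6)(4(u2²−u2u3+u3²)v1² + 4(u1²−u1u3+u3²)v2² + 4(u1²−u1u2+u2²)v3² + 2(u3(u1+u2)−2u1u2−2u3²)v1v2 + 2(u2(u1+u3)−2u1u3−2u2²)v1v3 + 2(u1(u2+u3)−2u2u3−2u1²)v2v3), each evaluated at v3 = 0. (This factorization produces two rational sections of the conic bundle model of the Burkhardt quartic X_{1/2} and proves its rationality.) -/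
/-- Remark 4.3: at v3 = 0 the equation q0(u)(v) + q∞(u)(v) of the Verra threefold model of
the Burkhardt quartic factors as a product of two bilinear forms, producing two rational
sections of the conic bundle and proving rationality of X_{1/2}. -/
theorem burkhardt_factorization (ω : ℂ) (hω : ω^2 + ω + 1 = 0)
    (u1 u2 u3 v1 v2 v3 : ℂ) (hv3 : v3 = 0) :
    (u3*(u2 - u1)*v1*v2 + u2*(u1 - u3)*v1*v3 + u1*(u3 - u2)*v2*v3) +
      (1/6 : ℂ) *
        (4*(u2^2 - u2*u3 + u3^2)*v1^2 + 4*(u1^2 - u1*u3 + u3^2)*v2^2 +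
          4*(u1^2 - u1*u2 + u2^2)*v3^2 +
          2*(u3*(u1 + u2) - 2*u1*u2 - 2*u3^2)*v1*v2 +
          2*(u2*(u1 + u3) - 2*u1*u3 - 2*u2^2)*v1*v3 +
          2*(u1*(u2 + u3) - 2*u2*u3 - 2*u1^2)*v2*v3) =
    (2/3 : ℂ) * (u1*v2 + ω*u2*v1 + ω^2*u3*v1 + ω*u3*v2) *
      (u1*v2 + ω^2*u2*v1 + ω*u3*v1 + ω^2*u3*v2) := by
  subst hv3
  linear_combination (-(2/3 : ℂ) *
      ((u1*v2)*(u2*v1) + (u1*v2)*(u3*v1) + (u1*v2)*(u3*v2) +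
        (ω - 1) * ((u2*v1)^2 + (u3*v1)^2 + (u3*v2)^2 + 2*(u2*v1)*(u3*v2)) +
        (ω^2 - ω + 1) * ((u2*v1)*(u3*v1) + (u3*v1)*(u3*v2)))) * hω
end

section
/- Let k be an algebraically closed field of characteristic zero and V a 5-dimensional k-vector space. If (L, P) and (L′, P′) are two Cremona–Richmond configurations in V, then they are projectively equivalent: there exists a linear automorphism g of V such that the set {g(L(ρ)) : ρ a fixed-point-free involution} equals {L′(ρ) : ρ a fixed-point-free involution} and the set {g(P(σ)) : σ a transposition} equals {P′(σ) : σ a transposition}. (Theorem A.4: a configuration of 15 lines with 15 intersection points in ℙ⁴ not contained in a ℙ³ and combinatorially isomorphic to the Cremona–Richmond configuration is unique up to projective transformation.) -/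
/-- A fixed-point-free involution of {1,…,6}: a permutation ρ with ρ² = id and no fixed
points (i.e. a product of three disjoint transpositions, an element of cycle type [2,2,2]). -/
def IsFPFInvolution (ρ : Equiv.Perm (Fin 6)) : Prop :=
  ρ * ρ = 1 ∧ ∀ i, ρ i ≠ i

/-- A Cremona–Richmond configuration in a 5-dimensional k-vector space V: an injective
assignment of a 2-dimensional subspace L(ρ) to every fixed-point-free involution ρ and of a
1-dimensional subspace P(σ) to every transposition σ, such that (a) P(σ) ⊆ L(ρ) iff
σρ = ρσ; (b) lines indexed by distinct non-commuting involutions meet only in 0; and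
(c) the lines together span V. -/
structure CremonaRichmondConfig (k V : Type*) [Field k] [AddCommGroup V] [Module k V] where
  L : {ρ : Equiv.Perm (Fin 6) // IsFPFInvolution ρ} → Submodule k V
  P : {σ : Equiv.Perm (Fin 6) // σ.IsSwap} → Submodule k V
  L_injective : Function.Injective L
  P_injective : Function.Injective P
  finrank_L : ∀ ρ, Module.finrank k (L ρ) = 2
  finrank_P : ∀ σ, Module.finrank k (P σ) = 1
  incidence : ∀ σ ρ, P σ ≤ L ρ ↔ σ.1 * ρ.1 = ρ.1 * σ.1
  lines_meet_trivially :
    ∀ ρ₁ ρ₂, ρ₁ ≠ ρ₂ → ρ₁.1 * ρ₂.1 ≠ ρ₂.1 * ρ₁.1 → L ρ₁ ⊓ L ρ₂ = ⊥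
  lines_span : (⨆ ρ, L ρ) = ⊤

/-!
The model configuration lives in `k⁶ / k·(1,…,1)`: the point of the transposition `(i j)` is
spanned by `eᵢ + eⱼ`, and the three points of a syntheme `(i j)(k l)(m n)` are collinear because
their representatives add up to `(1,…,1) = 0`. Every configuration is of this form: there are
`u₀, …, u₅ ∈ V`, whose only linear relation is `∑ uᵢ = 0`, with `P(i j) = k·(uᵢ + uⱼ)`. Two such
families differ by a linear automorphism, which then maps points to points and lines, each spanned
by two of its points, to lines.

To find the `uᵢ`, normalise representatives along the three lines through `(1 4)` and along the
line `(0 1)(2 3)(4 5)`; this fixes nine points. Every other point is forced into their span, so as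
the lines span `V` the `uᵢ` have no other relation. Then `(1 3)` lies on the line through `(0 2)`
and `(4 5)` and in the plane of `(0 1)`, `(0 5)`, `(3 5)`, which meet only in `k·(u₁ + u₃)`; the
same holds for `(1 2)` after exchanging `2` and `3`. The last four points are intersections of
two lines through points already found.
-/

open Equiv Submodule Module Set

instance : DecidablePred IsFPFInvolution := fun _ => inferInstanceAs (Decidable (_ ∧ _))

instance (a b : Perm (Fin 6)) : Decidable (Commute a b) :=
  inferInstanceAs (Decidable (a * b = b * a))

theorem commute_swap_of_apply_eq {α : Type*} [DecidableEq α] {ρ : Perm α} (hρ : ρ * ρ = 1)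
    {i j : α} (h : ρ i = j) : Commute (swap i j) ρ := by
  have hj : ρ j = i := by rw [← h, ← Perm.mul_apply, hρ, Perm.one_apply]
  have := swap_apply_apply ρ i j
  rw [h, hj, swap_comm] at this
  exact eq_mul_inv_iff_mul_eq.mp this

theorem forall_ne_of_forall_lt {α : Type*} [LinearOrder α] {p : ∀ i j : α, i ≠ j → Prop}
    (symm : ∀ i j h, p i j h → p j i h.symm) (h : ∀ i j (hij : i < j), p i j hij.ne)
    (i j : α) (hij : i ≠ j) : p i j hij :=
  hij.lt_or_gt.elim (h i j) fun hji => symm j i hji.ne (h j i hji)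

abbrev Transposition := {σ : Perm (Fin 6) // σ.IsSwap}

abbrev Syntheme := {ρ : Perm (Fin 6) // IsFPFInvolution ρ}

def transposition (i j : Fin 6) (h : i ≠ j := by decide) : Transposition :=
  ⟨swap i j, i, j, h, rfl⟩

def syntheme (a b c d e f : Fin 6)
    (h : IsFPFInvolution (swap a b * swap c d * swap e f) := by decide) : Syntheme :=
  ⟨_, h⟩

theorem forall_transposition {p : Transposition → Prop}
    (h : ∀ i j (hij : i ≠ j), p (transposition i j hij)) (σ : Transposition) : p σ := by
  obtain ⟨_, i, j, hij, rfl⟩ := σ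
  exact h i j hij

theorem exists_transpositions_commute (ρ : Syntheme) :
    ∃ σ τ : Transposition, σ ≠ τ ∧ Commute σ.1 ρ.1 ∧ Commute τ.1 ρ.1 := by
  obtain ⟨ρ, hρ, hfix⟩ := ρ
  obtain ⟨m, hm0, hm⟩ : ∃ m, m ≠ 0 ∧ m ≠ ρ 0 :=
    (by decide : ∀ a : Fin 6, ∃ m, m ≠ 0 ∧ m ≠ a) (ρ 0)
  have hρm : ρ m ≠ 0 := fun h => hm (by rw [← h, ← Perm.mul_apply, hρ, Perm.one_apply])
  refine ⟨transposition 0 (ρ 0) (hfix 0).symm, transposition m (ρ m) (hfix m).symm, fun h => ?_,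
    commute_swap_of_apply_eq hρ rfl, commute_swap_of_apply_eq hρ rfl⟩
  have := congrArg (fun σ => σ.1 0) h
  simp only [transposition, swap_apply_left, swap_apply_of_ne_of_ne hm0.symm hρm.symm] at this
  exact hfix 0 this

namespace CremonaRichmondConfig

variable {k V : Type*} [Field k] [AddCommGroup V] [Module k V] (𝒞 : CremonaRichmondConfig k V)

instance finiteDimensional_P (σ : Transposition) : FiniteDimensional k (𝒞.P σ) :=
  Module.finite_of_finrank_eq_succ (𝒞.finrank_P σ)

instance finiteDimensional_L (ρ : Syntheme) : FiniteDimensional k (𝒞.L ρ) :=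
  Module.finite_of_finrank_eq_succ (𝒞.finrank_L ρ)

theorem P_eq_span_of_mem {σ : Transposition} {x : V} (hx : x ∈ 𝒞.P σ) (hx₀ : x ≠ 0) :
    𝒞.P σ = k ∙ x :=
  (eq_of_le_of_finrank_eq ((span_singleton_le_iff_mem _ _).2 hx)
    (by rw [finrank_span_singleton hx₀, 𝒞.finrank_P])).symm

theorem P_eq_span_of_le {σ : Transposition} {x : V} (h : 𝒞.P σ ≤ k ∙ x) : 𝒞.P σ = k ∙ x :=
  eq_of_le_of_finrank_le h <| by
    simpa [𝒞.finrank_P] using finrank_span_le_card (R := k) ({x} : Set V)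

theorem exists_mem_P_ne_zero (σ : Transposition) : ∃ x ∈ 𝒞.P σ, x ≠ 0 :=
  exists_mem_ne_zero_of_ne_bot fun h => by
    have := 𝒞.finrank_P σ
    rw [h, finrank_bot] at this
    exact zero_ne_one this

theorem disjoint_P {σ τ : Transposition} (h : σ ≠ τ) : Disjoint (𝒞.P σ) (𝒞.P τ) :=
  disjoint_def.2 fun _ hσ hτ => by_contra fun hx => h <| 𝒞.P_injective <|
    (𝒞.P_eq_span_of_mem hσ hx).trans (𝒞.P_eq_span_of_mem hτ hx).symm

theorem L_eq_sup {ρ : Syntheme} {σ τ : Transposition} (hσ : Commute σ.1 ρ.1 := by decide)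
    (hτ : Commute τ.1 ρ.1 := by decide) (h : σ ≠ τ := by decide) : 𝒞.L ρ = 𝒞.P σ ⊔ 𝒞.P τ := by
  refine (eq_of_le_of_finrank_eq (sup_le ((𝒞.incidence σ ρ).2 hσ) ((𝒞.incidence τ ρ).2 hτ)) ?_).symm
  have := finrank_sup_add_finrank_inf_eq (𝒞.P σ) (𝒞.P τ)
  rw [(𝒞.disjoint_P h).eq_bot, finrank_bot, 𝒞.finrank_P, 𝒞.finrank_P] at this
  rw [𝒞.finrank_L]
  omega

theorem P_le_sup {ρ : Syntheme} {σ τ υ : Transposition} (hσ : Commute σ.1 ρ.1 := by decide)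
    (hτ : Commute τ.1 ρ.1 := by decide) (hυ : Commute υ.1 ρ.1 := by decide)
    (h : σ ≠ τ := by decide) : 𝒞.P υ ≤ 𝒞.P σ ⊔ 𝒞.P τ :=
  𝒞.L_eq_sup hσ hτ h ▸ (𝒞.incidence υ ρ).2 hυ

theorem P_eq_inf {σ : Transposition} {ρ₁ ρ₂ : Syntheme} (h₁ : Commute σ.1 ρ₁.1 := by decide)
    (h₂ : Commute σ.1 ρ₂.1 := by decide) (h : ρ₁ ≠ ρ₂ := by decide) :
    𝒞.P σ = 𝒞.L ρ₁ ⊓ 𝒞.L ρ₂ := by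
  refine eq_of_le_of_finrank_le (le_inf ((𝒞.incidence σ ρ₁).2 h₁) ((𝒞.incidence σ ρ₂).2 h₂)) ?_
  have hlt : 𝒞.L ρ₁ ⊓ 𝒞.L ρ₂ < 𝒞.L ρ₁ := inf_le_left.lt_of_ne fun he => h <| 𝒞.L_injective <|
    eq_of_le_of_finrank_eq (he ▸ inf_le_right) (by rw [𝒞.finrank_L, 𝒞.finrank_L])
  have := finrank_lt_finrank_of_lt hlt
  rw [𝒞.finrank_L] at this
  rw [𝒞.finrank_P]
  omega

theorem exists_add_mem {ρ : Syntheme} {σa σb σc : Transposition} {xa : V} (hxa : xa ∈ 𝒞.P σa)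
    (hxa₀ : xa ≠ 0) (ha : Commute σa.1 ρ.1 := by decide) (hb : Commute σb.1 ρ.1 := by decide)
    (hc : Commute σc.1 ρ.1 := by decide) (hab : σa ≠ σb := by decide)
    (hac : σa ≠ σc := by decide) (hbc : σb ≠ σc := by decide) :
    ∃ xb ∈ 𝒞.P σb, xb ≠ 0 ∧ xa + xb ∈ 𝒞.P σc ∧ xa + xb ≠ 0 := by
  obtain ⟨y, hy, z, hz, rfl⟩ := mem_sup.1 (𝒞.P_le_sup hb hc ha hbc hxa)
  have hy₀ : y ≠ 0 := by
    rintro rfl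
    exact hxa₀ (disjoint_def.1 (𝒞.disjoint_P hac) _ hxa (by simpa using hz))
  have hz₀ : z ≠ 0 := by
    rintro rfl
    exact hxa₀ (disjoint_def.1 (𝒞.disjoint_P hab) _ hxa (by simpa using hy))
  exact ⟨-y, neg_mem hy, neg_ne_zero.2 hy₀, by simpa using hz, by simpa using hz₀⟩

theorem add_mem_L {ρ : Syntheme} {σ τ : Transposition} {x y z : V} (hy : y ∈ 𝒞.P σ)
    (hz : z ∈ 𝒞.P τ) (h : x + y + z = 0) (hσ : Commute σ.1 ρ.1 := by decide)
    (hτ : Commute τ.1 ρ.1 := by decide) : x ∈ 𝒞.L ρ := by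
  rw [show x = -(y + z) by linear_combination (norm := module) h]
  exact neg_mem (add_mem ((𝒞.incidence σ ρ).2 hσ hy) ((𝒞.incidence τ ρ).2 hτ hz))

theorem eq_top_of_forall_P_le {W : Submodule k V} (hW : ∀ σ, 𝒞.P σ ≤ W) : W = ⊤ := by
  refine eq_top_iff.2 (𝒞.lines_span ▸ iSup_le fun ρ => ?_)
  obtain ⟨σ, τ, h, hσ, hτ⟩ := exists_transpositions_commute ρ
  rw [𝒞.L_eq_sup hσ hτ h]
  exact sup_le (hW σ) (hW τ)

end CremonaRichmondConfig

section SimplexFrame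

variable (k : Type*) {V ι : Type*} [Field k] [AddCommGroup V] [Module k V] [Fintype ι]

def IsSimplexFrame (u : ι → V) : Prop :=
  ∑ i, u i = 0 ∧ ∀ c : ι → k, ∑ i, c i • u i = 0 → ∀ i j, c i = c j

variable {k}

theorem isSimplexFrame_of_span_eq_top {u : ι → V} (hcard : Fintype.card ι = finrank k V + 1)
    (hsum : ∑ i, u i = 0) (hspan : span k (range u) = ⊤) : IsSimplexFrame k u := by
  refine ⟨hsum, fun c hc i j => ?_⟩
  set φ := Fintype.linearCombination k u
  have hone : (fun _ => 1 : ι → k) ≠ 0 := by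
    have : Nonempty ι := Fintype.card_pos_iff.1 (by omega)
    exact Function.ne_iff.2 ⟨Classical.arbitrary ι, one_ne_zero⟩
  have hker : φ.ker = k ∙ (fun _ => 1) := by
    refine (eq_of_le_of_finrank_eq ((span_singleton_le_iff_mem _ _).2 ?_) ?_).symm
    · simpa [φ, Fintype.linearCombination_apply] using hsum
    · have := φ.finrank_range_add_finrank_ker
      rw [Fintype.range_linearCombination, hspan, finrank_top, finrank_fintype_fun_eq_card,
        hcard] at this
      rw [finrank_span_singleton hone]
      omega
  have : c ∈ φ.ker := by simpa [φ, Fintype.linearCombination_apply] using hc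
  obtain ⟨t, rfl⟩ := mem_span_singleton.1 (hker ▸ this)
  rfl

theorem IsSimplexFrame.comp_equiv {u : ι → V} (hu : IsSimplexFrame k u) (e : ι ≃ ι) :
    IsSimplexFrame k (u ∘ e) := by
  refine ⟨(e.sum_comp u).trans hu.1, fun c hc i j => ?_⟩
  have := hu.2 (c ∘ e.symm) (by rw [← e.sum_comp]; simpa using hc) (e i) (e j)
  simpa using this

theorem IsSimplexFrame.add_ne_zero {u : ι → V} (hu : IsSimplexFrame k u)
    (hι : 2 < Fintype.card ι) {i j : ι} (hij : i ≠ j) : u i + u j ≠ 0 := by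
  classical
  intro h
  obtain ⟨l, hl, hlj⟩ := Finset.exists_mem_ne (s := Finset.univ.erase i)
    (by rw [Finset.card_erase_of_mem (Finset.mem_univ i), Finset.card_univ]; omega) j
  have := hu.2 (Pi.single i 1 + Pi.single j 1)
    (by simpa [add_smul, Finset.sum_add_distrib] using h) i l
  simp [hij, Finset.ne_of_mem_erase hl, hlj] at this

theorem IsSimplexFrame.linearIndependent_castSucc {n : ℕ} {u : Fin (n + 1) → V}
    (hu : IsSimplexFrame k u) : LinearIndependent k fun i : Fin n => u i.castSucc := by
  refine Fintype.linearIndependent_iff.2 fun c hc i => ?_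
  have := hu.2 (Fin.snoc c 0) (by simpa [Fin.sum_univ_castSucc] using hc) i.castSucc (Fin.last n)
  simpa using this

theorem IsSimplexFrame.exists_linearEquiv {V' : Type*} [AddCommGroup V'] [Module k V']
    [FiniteDimensional k V] [FiniteDimensional k V'] {n : ℕ} (hV : finrank k V = n)
    (hV' : finrank k V' = n) {u : Fin (n + 1) → V} {u' : Fin (n + 1) → V'}
    (hu : IsSimplexFrame k u) (hu' : IsSimplexFrame k u') :
    ∃ g : V ≃ₗ[k] V', ∀ i, g (u i) = u' i := by
  let B := basisOfLinearIndependentOfCardEqFinrank' _ hu.linearIndependent_castSucc (by simp [hV])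
  let B' :=
    basisOfLinearIndependentOfCardEqFinrank' _ hu'.linearIndependent_castSucc (by simp [hV'])
  let g := B.equiv B' (Equiv.refl _)
  have hg : ∀ i : Fin n, g (u i.castSucc) = u' i.castSucc := fun i => by
    have := B.equiv_apply i B' (Equiv.refl _)
    simp only [B, B', coe_basisOfLinearIndependentOfCardEqFinrank', Equiv.refl_apply] at this
    exact this
  refine ⟨g, fun i => Fin.lastCases ?_ hg i⟩
  rw [eq_neg_of_add_eq_zero_right ((Fin.sum_univ_castSucc u).symm.trans hu.1),
    eq_neg_of_add_eq_zero_right ((Fin.sum_univ_castSucc u').symm.trans hu'.1), map_neg, map_sum]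
  simp only [hg]

theorem IsSimplexFrame.inf_le_span {u : Fin 6 → V} (hu : IsSimplexFrame k u) :
    (k ∙ (u 0 + u 2) ⊔ k ∙ (u 4 + u 5)) ⊓ (k ∙ (u 0 + u 5) ⊔ (k ∙ (u 0 + u 1) ⊔ k ∙ (u 3 + u 5))) ≤
      k ∙ (u 1 + u 3) := by
  intro v hv
  simp only [mem_inf, mem_sup, mem_span_singleton] at hv
  obtain ⟨⟨_, ⟨a, rfl⟩, _, ⟨b, rfl⟩, rfl⟩, _, ⟨d, rfl⟩, _, ⟨_, ⟨c, rfl⟩, _, ⟨e, rfl⟩, rfl⟩, he⟩ :=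
    hv
  have hab : a = b := by
    refine hu.2 ![a - c - d, -c, a, -e, b, b - d - e] ?_ 2 4
    simp only [Fin.sum_univ_six, Matrix.cons_val_zero, Matrix.cons_val_one, Matrix.cons_val]
    linear_combination (norm := module) -he
  have hsum := hu.1
  simp only [Fin.sum_univ_six] at hsum
  exact mem_span_singleton.2 ⟨-a, by rw [← hab]; linear_combination (norm := module) -a • hsum⟩

end SimplexFrame

namespace CremonaRichmondConfig

variable {k V : Type*} [Field k] [AddCommGroup V] [Module k V] (𝒞 : CremonaRichmondConfig k V)

def IsAdapted (u : Fin 6 → V) (i j : Fin 6) (h : i ≠ j := by decide) : Prop :=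
  𝒞.P (transposition i j h) = k ∙ (u i + u j)

variable {𝒞}

theorem IsAdapted.symm {u : Fin 6 → V} {i j : Fin 6} {h : i ≠ j} (hu : 𝒞.IsAdapted u i j h) :
    𝒞.IsAdapted u j i h.symm := by
  rw [IsAdapted, add_comm, ← hu]
  exact congrArg 𝒞.P (Subtype.ext (swap_comm j i))

theorem IsAdapted.add_mem {u : Fin 6 → V} {i j : Fin 6} {h : i ≠ j} (hu : 𝒞.IsAdapted u i j h) :
    u i + u j ∈ 𝒞.P (transposition i j h) :=
  hu ▸ mem_span_singleton_self _

theorem IsAdapted.le_span {u : Fin 6 → V} {i j : Fin 6} {h : i ≠ j} (hu : 𝒞.IsAdapted u i j h) :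
    𝒞.P (transposition i j h) ≤ span k (range u) :=
  hu ▸ (span_singleton_le_iff_mem _ _).2
    (Submodule.add_mem _ (subset_span (mem_range_self i)) (subset_span (mem_range_self j)))

variable (𝒞)

def IsSeedAdapted (u : Fin 6 → V) : Prop :=
  𝒞.IsAdapted u 1 4 ∧ 𝒞.IsAdapted u 0 2 ∧ 𝒞.IsAdapted u 3 5 ∧ 𝒞.IsAdapted u 0 3 ∧
    𝒞.IsAdapted u 2 5 ∧ 𝒞.IsAdapted u 2 3 ∧ 𝒞.IsAdapted u 0 5 ∧ 𝒞.IsAdapted u 0 1 ∧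
    𝒞.IsAdapted u 4 5

theorem exists_isSeedAdapted [NeZero (2 : k)] :
    ∃ u : Fin 6 → V, ∑ i, u i = 0 ∧ 𝒞.IsSeedAdapted u := by
  obtain ⟨w14, h14, h14₀⟩ := 𝒞.exists_mem_P_ne_zero (transposition 1 4)
  obtain ⟨w02, h02, h02₀, h35, h35₀⟩ := 𝒞.exists_add_mem (ρ := syntheme 1 4 0 2 3 5)
    (σb := transposition 0 2) (σc := transposition 3 5) h14 h14₀
  obtain ⟨w03, h03, h03₀, h25, h25₀⟩ := 𝒞.exists_add_mem (ρ := syntheme 1 4 0 3 2 5)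
    (σb := transposition 0 3) (σc := transposition 2 5) h14 h14₀
  obtain ⟨w23, h23, h23₀, h05, h05₀⟩ := 𝒞.exists_add_mem (ρ := syntheme 1 4 2 3 0 5)
    (σb := transposition 2 3) (σc := transposition 0 5) h14 h14₀
  obtain ⟨w01, h01, h01₀, h45, h45₀⟩ := 𝒞.exists_add_mem (ρ := syntheme 2 3 0 1 4 5)
    (σb := transposition 0 1) (σc := transposition 4 5) h23 h23₀
  -- the solution of `uᵢ + uⱼ = 2 • wᵢⱼ` for `(i j) = (0 1), (2 3), (0 2), (0 3), (1 4)`, `∑ uᵢ = 0`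
  let u : Fin 6 → V := ![w02 + w03 - w23, 2 • w01 - w02 - w03 + w23, w02 - w03 + w23,
    w03 - w02 + w23, 2 • w14 - 2 • w01 + w02 + w03 - w23, -2 • w14 - w02 - w03 - w23]
  have adapted : ∀ {i j : Fin 6} {h : i ≠ j} {x : V} (c : k), x ∈ 𝒞.P (transposition i j h) →
      x ≠ 0 → u i + u j = c • x → c ≠ 0 → 𝒞.IsAdapted u i j h := fun c hx hx₀ hc hc₀ => by
    rw [IsAdapted, hc]
    exact 𝒞.P_eq_span_of_mem (smul_mem _ c hx) (smul_ne_zero hc₀ hx₀)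
  have hsum : ∑ i, u i = 0 := by
    simp only [u, Fin.sum_univ_six, Matrix.cons_val_zero, Matrix.cons_val_one, Matrix.cons_val]
    module
  refine ⟨u, hsum, adapted 2 h14 h14₀ ?_ two_ne_zero,
    adapted 2 h02 h02₀ ?_ two_ne_zero, adapted (-2) h35 h35₀ ?_ (neg_ne_zero.2 two_ne_zero),
    adapted 2 h03 h03₀ ?_ two_ne_zero, adapted (-2) h25 h25₀ ?_ (neg_ne_zero.2 two_ne_zero),
    adapted 2 h23 h23₀ ?_ two_ne_zero, adapted (-2) h05 h05₀ ?_ (neg_ne_zero.2 two_ne_zero),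
    adapted 2 h01 h01₀ ?_ two_ne_zero, adapted (-2) h45 h45₀ ?_ (neg_ne_zero.2 two_ne_zero)⟩ <;>
  simp only [u, Matrix.cons_val_zero, Matrix.cons_val_one, Matrix.cons_val] <;> module

theorem span_range_eq_top_of_isSeedAdapted {u : Fin 6 → V} (hu : 𝒞.IsSeedAdapted u) :
    span k (range u) = ⊤ := by
  obtain ⟨h14, h02, h35, h03, h25, h23, h05, h01, h45⟩ := hu
  have h24 : 𝒞.P (transposition 2 4) ≤ span k (range u) :=
    (𝒞.P_le_sup (ρ := syntheme 0 1 2 4 3 5)).trans (sup_le h01.le_span h35.le_span)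
  have h34 : 𝒞.P (transposition 3 4) ≤ span k (range u) :=
    (𝒞.P_le_sup (ρ := syntheme 0 1 2 5 3 4)).trans (sup_le h01.le_span h25.le_span)
  have h13 : 𝒞.P (transposition 1 3) ≤ span k (range u) :=
    (𝒞.P_le_sup (ρ := syntheme 0 2 1 3 4 5)).trans (sup_le h02.le_span h45.le_span)
  have h12 : 𝒞.P (transposition 1 2) ≤ span k (range u) :=
    (𝒞.P_le_sup (ρ := syntheme 0 3 1 2 4 5)).trans (sup_le h03.le_span h45.le_span)
  have h15 : 𝒞.P (transposition 1 5) ≤ span k (range u) :=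
    (𝒞.P_le_sup (ρ := syntheme 0 3 1 5 2 4)).trans (sup_le h03.le_span h24)
  have h04 : 𝒞.P (transposition 0 4) ≤ span k (range u) :=
    (𝒞.P_le_sup (ρ := syntheme 0 4 1 5 2 3)).trans (sup_le h15 h23.le_span)
  refine 𝒞.eq_top_of_forall_P_le (forall_transposition (forall_ne_of_forall_lt ?_ ?_))
  · intro i j hij hle
    rwa [show transposition j i hij.symm = transposition i j hij from Subtype.ext (swap_comm j i)]
  · intro i j hij
    fin_cases i <;> fin_cases j <;>
      first | exact absurd hij (by decide) | assumption | exact IsAdapted.le_span (by assumption)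

theorem isAdapted_of_mem_L {u : Fin 6 → V} (hu : IsSimplexFrame k u) {i j : Fin 6} {h : i ≠ j}
    {ρ₁ ρ₂ : Syntheme} (h₁ : u i + u j ∈ 𝒞.L ρ₁) (h₂ : u i + u j ∈ 𝒞.L ρ₂)
    (hc₁ : Commute (transposition i j h).1 ρ₁.1 := by decide)
    (hc₂ : Commute (transposition i j h).1 ρ₂.1 := by decide) (hρ : ρ₁ ≠ ρ₂ := by decide) :
    𝒞.IsAdapted u i j h :=
  𝒞.P_eq_span_of_mem (𝒞.P_eq_inf hc₁ hc₂ hρ ▸ ⟨h₁, h₂⟩) (hu.add_ne_zero (by simp) h)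

theorem isAdapted_one_three {u : Fin 6 → V} (hu : IsSimplexFrame k u) (h02 : 𝒞.IsAdapted u 0 2)
    (h45 : 𝒞.IsAdapted u 4 5) (h05 : 𝒞.IsAdapted u 0 5) (h01 : 𝒞.IsAdapted u 0 1)
    (h35 : 𝒞.IsAdapted u 3 5) : 𝒞.IsAdapted u 1 3 := by
  refine 𝒞.P_eq_span_of_le (le_trans (le_inf ?_ ?_) hu.inf_le_span)
  · rw [← h02, ← h45]
    exact 𝒞.P_le_sup (ρ := syntheme 0 2 1 3 4 5)
  · rw [← h05, ← h01, ← h35]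
    exact (𝒞.P_le_sup (ρ := syntheme 0 5 1 3 2 4) (τ := transposition 2 4)).trans
      (sup_le_sup_left (𝒞.P_le_sup (ρ := syntheme 0 1 2 4 3 5)) _)

theorem isAdapted_one_two {u : Fin 6 → V} (hu : IsSimplexFrame k u) (h03 : 𝒞.IsAdapted u 0 3)
    (h45 : 𝒞.IsAdapted u 4 5) (h05 : 𝒞.IsAdapted u 0 5) (h01 : 𝒞.IsAdapted u 0 1)
    (h25 : 𝒞.IsAdapted u 2 5) : 𝒞.IsAdapted u 1 2 := by
  have key := (hu.comp_equiv (swap 2 3)).inf_le_span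
  simp only [Function.comp_apply, swap_apply_def, Fin.reduceEq, ↓reduceIte] at key
  refine 𝒞.P_eq_span_of_le (le_trans (le_inf ?_ ?_) key)
  · rw [← h03, ← h45]
    exact 𝒞.P_le_sup (ρ := syntheme 0 3 1 2 4 5)
  · rw [← h05, ← h01, ← h25]
    exact (𝒞.P_le_sup (ρ := syntheme 0 5 1 2 3 4) (τ := transposition 3 4)).trans
      (sup_le_sup_left (𝒞.P_le_sup (ρ := syntheme 0 1 2 5 3 4)) _)

theorem forall_isAdapted {u : Fin 6 → V} (hu : IsSimplexFrame k u) (hs : 𝒞.IsSeedAdapted u) :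
    ∀ i j h, 𝒞.IsAdapted u i j h := by
  obtain ⟨h14, h02, h35, h03, h25, h23, h05, h01, h45⟩ := hs
  have hsum : u 0 + u 1 + u 2 + u 3 + u 4 + u 5 = 0 := by simpa [Fin.sum_univ_six] using hu.1
  have h13 := 𝒞.isAdapted_one_three hu h02 h45 h05 h01 h35
  have h12 := 𝒞.isAdapted_one_two hu h03 h45 h05 h01 h25
  have h04 : 𝒞.IsAdapted u 0 4 := 𝒞.isAdapted_of_mem_L hu
    (𝒞.add_mem_L (ρ := syntheme 0 4 1 2 3 5) h12.add_mem h35.add_mem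
      (by linear_combination (norm := module) hsum))
    (𝒞.add_mem_L (ρ := syntheme 0 4 1 3 2 5) h13.add_mem h25.add_mem
      (by linear_combination (norm := module) hsum))
  have h24 : 𝒞.IsAdapted u 2 4 := 𝒞.isAdapted_of_mem_L hu
    (𝒞.add_mem_L (ρ := syntheme 0 1 2 4 3 5) h01.add_mem h35.add_mem
      (by linear_combination (norm := module) hsum))
    (𝒞.add_mem_L (ρ := syntheme 0 5 1 3 2 4) h05.add_mem h13.add_mem
      (by linear_combination (norm := module) hsum))
  have h34 : 𝒞.IsAdapted u 3 4 := 𝒞.isAdapted_of_mem_L hu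
    (𝒞.add_mem_L (ρ := syntheme 0 1 2 5 3 4) h01.add_mem h25.add_mem
      (by linear_combination (norm := module) hsum))
    (𝒞.add_mem_L (ρ := syntheme 0 5 1 2 3 4) h05.add_mem h12.add_mem
      (by linear_combination (norm := module) hsum))
  have h15 : 𝒞.IsAdapted u 1 5 := 𝒞.isAdapted_of_mem_L hu
    (𝒞.add_mem_L (ρ := syntheme 0 2 1 5 3 4) h02.add_mem h34.add_mem
      (by linear_combination (norm := module) hsum))
    (𝒞.add_mem_L (ρ := syntheme 0 3 1 5 2 4) h03.add_mem h24.add_mem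
      (by linear_combination (norm := module) hsum))
  refine forall_ne_of_forall_lt (fun _ _ _ h => h.symm) fun i j hij => ?_
  fin_cases i <;> fin_cases j <;> first | exact absurd hij (by decide) | assumption

theorem exists_isSimplexFrame_forall_isAdapted [NeZero (2 : k)] (h5 : finrank k V = 5) :
    ∃ u : Fin 6 → V, IsSimplexFrame k u ∧ ∀ i j h, 𝒞.IsAdapted u i j h := by
  obtain ⟨u, hsum, hs⟩ := 𝒞.exists_isSeedAdapted
  have hu := isSimplexFrame_of_span_eq_top (by simp [h5]) hsum
    (𝒞.span_range_eq_top_of_isSeedAdapted hs)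
  exact ⟨u, hu, 𝒞.forall_isAdapted hu hs⟩

end CremonaRichmondConfig

theorem cremonaRichmond_unique_general (k V : Type*) [Field k] [CharZero k]
    [AddCommGroup V] [Module k V] (h5 : Module.finrank k V = 5)
    (𝒞 𝒞' : CremonaRichmondConfig k V) :
    ∃ g : V ≃ₗ[k] V,
      Set.range (fun ρ => (𝒞.L ρ).map (g : V →ₗ[k] V)) = Set.range 𝒞'.L ∧
      Set.range (fun σ => (𝒞.P σ).map (g : V →ₗ[k] V)) = Set.range 𝒞'.P := by
  have : FiniteDimensional k V := Module.finite_of_finrank_eq_succ h5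
  obtain ⟨u, hu, hP⟩ := 𝒞.exists_isSimplexFrame_forall_isAdapted h5
  obtain ⟨u', hu', hP'⟩ := 𝒞'.exists_isSimplexFrame_forall_isAdapted h5
  obtain ⟨g, hg⟩ := hu.exists_linearEquiv h5 h5 hu'
  have hgP : ∀ σ, (𝒞.P σ).map (g : V →ₗ[k] V) = 𝒞'.P σ := forall_transposition fun i j h => by
    rw [hP i j h, hP' i j h, map_span, image_singleton, LinearEquiv.coe_coe, map_add, hg, hg]
  have hgL : ∀ ρ, (𝒞.L ρ).map (g : V →ₗ[k] V) = 𝒞'.L ρ := fun ρ => by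
    obtain ⟨σ, τ, hστ, hσ, hτ⟩ := exists_transpositions_commute ρ
    rw [𝒞.L_eq_sup hσ hτ hστ, 𝒞'.L_eq_sup hσ hτ hστ, Submodule.map_sup, hgP, hgP]
  exact ⟨g, congrArg range (funext hgL), congrArg range (funext hgP)⟩

/-- Theorem A.4: any two Cremona–Richmond configurations in a 5-dimensional vector space
over an algebraically closed field of characteristic zero are projectively equivalent. -/
theorem cremonaRichmond_unique (k V : Type*) [Field k] [IsAlgClosed k] [CharZero k]
    [AddCommGroup V] [Module k V] (h5 : Module.finrank k V = 5)
    (𝒞 𝒞' : CremonaRichmondConfig k V) :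
    ∃ g : V ≃ₗ[k] V,
      Set.range (fun ρ => (𝒞.L ρ).map (g : V →ₗ[k] V)) = Set.range 𝒞'.L ∧
      Set.range (fun σ => (𝒞.P σ).map (g : V →ₗ[k] V)) = Set.range 𝒞'.P :=
  cremonaRichmond_unique_general k V h5 𝒞 𝒞'
end

section
/- Fix an element a ∈ {1,…,6}. For any two fixed-point-free involutions ρ1 and ρ2 of {1,…,6}, there exists an even permutation g of {1,…,6} with g(a) = a and g ρ1 g⁻¹ = ρ2. In other words, the standard subgroup A5 ⊂ S6 (even permutations fixing a point) acts transitively by conjugation on the 15 fixed-point-free involutions. (Corollary A.2, first part: every standard subgroup A5 of S6 acts transitively on the set of 15 lines of the Cremona–Richmond configuration.) -/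
/-!
All fixed-point-free involutions of a finite set have the same cycle type `2 ^ (n / 2)`, so
some `g ∈ S₆` conjugates `ρ₁` to `ρ₂`. Any such `g` may be corrected by an element of the
centraliser of `ρ₂`: this centraliser is transitive (it contains `(x ρx)` and
`(x y)(ρx ρy)`), so `g a` can be moved back to `a`, and a transposition `(c ρc)` with
`c ∉ {a, ρa}` is an odd element of it fixing `a`, so the sign can be made even.
-/

open Equiv Equiv.Perm

namespace Equiv.Perm

variable {α : Type*} {ρ : Perm α}

theorem apply_apply_of_mul_self_eq_one (hinv : ρ * ρ = 1) (x : α) : ρ (ρ x) = x :=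
  DFunLike.congr_fun hinv x

theorem commute_of_mul_mul_inv_eq {G : Type*} [Group G] {a b : G} (h : a * b * a⁻¹ = b) :
    Commute b a :=
  (mul_inv_eq_iff_eq_mul.1 h).symm

section Involution

variable [DecidableEq α]

theorem commute_swap_apply_of_mul_self_eq_one (hinv : ρ * ρ = 1) (x : α) :
    Commute (swap x (ρ x)) ρ := by
  apply commute_of_mul_mul_inv_eq
  rw [← swap_apply_apply, apply_apply_of_mul_self_eq_one hinv, swap_comm]

theorem commute_swap_mul_swap_apply_of_mul_self_eq_one (hinv : ρ * ρ = 1)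
    (hfix : ∀ i, ρ i ≠ i) {a b : α} (hb : b ≠ ρ a) :
    Commute (swap a b * swap (ρ a) (ρ b)) ρ := by
  by_cases hab : a = b
  · subst hab
    rw [swap_self, swap_self]
    exact (Commute.one_left ρ).mul_left (Commute.one_left ρ)
  have hρρ := apply_apply_of_mul_self_eq_one hinv
  have hnodup : [a, b, ρ a, ρ b].Nodup := by
    have : a ≠ ρ b := fun h ↦ hb (by rw [h, hρρ])
    simp only [List.nodup_cons, List.mem_cons, List.not_mem_nil, ρ.injective.ne hab]
    grind
  apply commute_of_mul_mul_inv_eq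
  calc ρ * (swap a b * swap (ρ a) (ρ b)) * ρ⁻¹
      = (ρ * swap a b * ρ⁻¹) * (ρ * swap (ρ a) (ρ b) * ρ⁻¹) := by group
    _ = swap (ρ a) (ρ b) * swap a b := by rw [← swap_apply_apply, ← swap_apply_apply, hρρ, hρρ]
    _ = swap a b * swap (ρ a) (ρ b) := (disjoint_swap_swap hnodup).commute.eq.symm

theorem exists_commute_apply_eq_of_mul_self_eq_one (hinv : ρ * ρ = 1) (hfix : ∀ i, ρ i ≠ i)
    (a b : α) : ∃ h : Perm α, Commute h ρ ∧ h b = a := by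
  by_cases hb : b = ρ a
  · exact ⟨swap a (ρ a), commute_swap_apply_of_mul_self_eq_one hinv a,
      by rw [hb, swap_apply_right]⟩
  · refine ⟨swap a b * swap (ρ a) (ρ b),
      commute_swap_mul_swap_apply_of_mul_self_eq_one hinv hfix hb, ?_⟩
    rw [mul_apply, swap_apply_of_ne_of_ne hb (hfix b).symm, swap_apply_right]

end Involution

section Finite

variable [Fintype α] [DecidableEq α]

theorem cycleType_eq_replicate_of_mul_self_eq_one (hinv : ρ * ρ = 1) (hfix : ∀ i, ρ i ≠ i) :
    ρ.cycleType = Multiset.replicate (Fintype.card α / 2) 2 := by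
  have hrep := cycleType_of_pow_prime_eq_one (p := 2) (by rwa [sq])
  have hsum : ρ.cycleType.sum = Fintype.card α := by
    rw [sum_cycleType, ← Finset.card_univ]
    congr
    ext x
    simpa using hfix x
  rw [hrep, Multiset.sum_replicate, smul_eq_mul] at hsum
  rw [hrep, ← hsum, Nat.mul_div_cancel _ two_pos]

theorem isConj_of_mul_self_eq_one {ρ₁ ρ₂ : Perm α} (hinv₁ : ρ₁ * ρ₁ = 1) (hfix₁ : ∀ i, ρ₁ i ≠ i)
    (hinv₂ : ρ₂ * ρ₂ = 1) (hfix₂ : ∀ i, ρ₂ i ≠ i) : IsConj ρ₁ ρ₂ := by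
  rw [isConj_iff_cycleType_eq, cycleType_eq_replicate_of_mul_self_eq_one hinv₁ hfix₁,
    cycleType_eq_replicate_of_mul_self_eq_one hinv₂ hfix₂]

theorem exists_commute_apply_eq_sign_eq (hinv : ρ * ρ = 1) (hfix : ∀ i, ρ i ≠ i)
    (hcard : 2 < Fintype.card α) (a b : α) (s : ℤˣ) :
    ∃ h : Perm α, Commute h ρ ∧ h b = a ∧ sign h = s := by
  obtain ⟨h, hcomm, hba⟩ := exists_commute_apply_eq_of_mul_self_eq_one hinv hfix a b
  by_cases hs : sign h = s
  · exact ⟨h, hcomm, hba, hs⟩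
  obtain ⟨c, -, hc⟩ : ∃ c ∈ Finset.univ, c ∉ ({a, ρ a} : Finset α) :=
    Finset.exists_mem_notMem_of_card_lt_card
      ((Finset.card_le_two).trans_lt (by rwa [Finset.card_univ]))
  rw [Finset.mem_insert, Finset.mem_singleton, not_or] at hc
  have hac : a ≠ ρ c := fun h ↦ hc.2 (by rw [h, apply_apply_of_mul_self_eq_one hinv])
  refine ⟨swap c (ρ c) * h, (commute_swap_apply_of_mul_self_eq_one hinv c).mul_left hcomm,
    by rw [mul_apply, hba, swap_apply_of_ne_of_ne (Ne.symm hc.1) hac], ?_⟩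
  rw [Perm.sign_mul, sign_swap (hfix c).symm, Int.units_ne_iff_eq_neg.1 hs, neg_one_mul, neg_neg]

end Finite

end Equiv.Perm

/-- Corollary A.2 (first part): the standard subgroup A5 ⊂ S6 of even permutations fixing a
chosen point a acts transitively by conjugation on the 15 fixed-point-free involutions of
{1,…,6}, i.e. on the 15 lines of the Cremona–Richmond configuration. -/
theorem standard_A5_transitive_on_fpf_involutions (a : Fin 6) (ρ₁ ρ₂ : Equiv.Perm (Fin 6))
    (h₁ : ρ₁ * ρ₁ = 1 ∧ ∀ i, ρ₁ i ≠ i) (h₂ : ρ₂ * ρ₂ = 1 ∧ ∀ i, ρ₂ i ≠ i) :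
    ∃ g : Equiv.Perm (Fin 6), Equiv.Perm.sign g = 1 ∧ g a = a ∧ g * ρ₁ * g⁻¹ = ρ₂ := by
  obtain ⟨g, hg⟩ := isConj_iff.1 (isConj_of_mul_self_eq_one h₁.1 h₁.2 h₂.1 h₂.2)
  obtain ⟨h, hcomm, hga, hsign⟩ :=
    exists_commute_apply_eq_sign_eq h₂.1 h₂.2 (by decide) a (g a) (sign g)
  refine ⟨h * g, by rw [Perm.sign_mul, hsign, Int.units_mul_self], hga, ?_⟩
  calc h * g * ρ₁ * (h * g)⁻¹ = h * (g * ρ₁ * g⁻¹) * h⁻¹ := by group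
    _ = ρ₂ := by rw [hg, hcomm.mul_inv_cancel]
end

section
/- Let R be a commutative ring and let y = (y1,y2,y3), z = (z1,z2,z3) be triples of elements of R. Set d1 = s1(y) − s1(z) and d2 = s2(y) − s2(z). Then (d1·y1 − d2)(d1·y2 − d2)(d1·y3 − d2) − (d1·z1 − d2)(d1·z2 − d2)(d1·z3 − d2) = d1³·(s3(y) − s3(z)). In particular, if s3(y) = s3(z) (i.e. the point (y,z) lies on the Perazzo cubic y1y2y3 = z1z2z3), then the image point (y′_i, z′_i) with y′_i = d1·y_i − d2 and z′_i = d1·z_i − d2 again satisfies y′1y′2y′3 = z′1z′2z′3. (This is the verification that the explicit formula of Remark 2.4 defines the Galois involution of the double covering on the Perazzo cubic.) -/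
/-- Remark 2.4: the explicit formula (2.11) defines the Galois involution of the double
covering on the Perazzo cubic y1y2y3 = z1z2z3. With d1 = s1(y) − s1(z) and
d2 = s2(y) − s2(z), one has ∏(d1·yᵢ − d2) − ∏(d1·zᵢ − d2) = d1³·(s3(y) − s3(z)); in
particular if s3(y) = s3(z) then the image point again lies on the Perazzo cubic. -/
theorem perazzo_involution_formula {R : Type*} [CommRing R] (y1 y2 y3 z1 z2 z3 d1 d2 : R)
    (hd1 : d1 = (y1 + y2 + y3) - (z1 + z2 + z3))
    (hd2 : d2 = (y1*y2 + y1*y3 + y2*y3) - (z1*z2 + z1*z3 + z2*z3)) :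
    (d1*y1 - d2) * (d1*y2 - d2) * (d1*y3 - d2) -
        (d1*z1 - d2) * (d1*z2 - d2) * (d1*z3 - d2) =
      d1^3 * (y1*y2*y3 - z1*z2*z3) ∧
    (y1*y2*y3 = z1*z2*z3 →
      (d1*y1 - d2) * (d1*y2 - d2) * (d1*y3 - d2) =
        (d1*z1 - d2) * (d1*z2 - d2) * (d1*z3 - d2)) := by
  subst hd1 hd2
  constructor
  · ring
  · intro h
    linear_combination ((y1 + y2 + y3) - (z1 + z2 + z3))^3 * h
end
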